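/- Let H' be a bipartite graph such that its 1-subdivision H = T_1(H') is cubical. Then ex(Q_n, H) = o(n·2^{n-1}); that is, for every constant c > 0, for all sufficiently large n, every subgraph of Q_n with at least c·n·2^{n-1} edges contains a subgraph isomorphic to T_1(H'). -/

import Mathlib

open SimpleGraph

/-- The hypercube graph `Q_n`. -/
def hypercube (n : ℕ) : SimpleGraph (Finset (Fin n)) where
  Adj A B := (A ⊆ B ∧ B.card = A.card + 1) ∨ (B ⊆ A ∧ A.card = B.card + 1)
  symm := ⟨fun A B h => h.symm⟩
  loopless := by
    refine ⟨fun A h => ?_⟩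
    rcases h with ⟨-, h⟩ | ⟨-, h⟩ <;> omega

/-- `G` contains a copy of `H`, i.e. `H` is isomorphic to a subgraph of `G`. -/
def ContainsCopy {α β : Type*} (G : SimpleGraph α) (H : SimpleGraph β) : Prop :=
  ∃ f : β → α, Function.Injective f ∧ ∀ u v, H.Adj u v → G.Adj (f u) (f v)

/-- A graph is cubical if it is isomorphic to a subgraph of a hypercube. -/
def IsCubical {V : Type*} (G : SimpleGraph V) : Prop :=
  ∃ n : ℕ, ContainsCopy (hypercube n) G

/-- The number of edges of a graph. -/
noncomputable def numEdges {V : Type*} (G : SimpleGraph V) : ℕ := Nat.card G.edgeSet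

/-- The 1-subdivision `T₁(G)` of a graph `G`: each edge is replaced by a path with one new
internal vertex. -/
def oneSubdivision {V : Type*} (G : SimpleGraph V) : SimpleGraph (V ⊕ G.edgeSet) :=
  SimpleGraph.fromRel (fun x y =>
    match x, y with
    | Sum.inl v, Sum.inr e => v ∈ (e : Sym2 V)
    | _, _ => False)

/-!
An edge of `G ≤ Q_n` runs from a top vertex `C` down to `C \ {z}`; let `d(C)` count these `z`.
Two edges below `C`, removing `x` and `y`, form a cherry over `A = C \ {x, y}`: both `A ∪ {x}`
and `A ∪ {y}` are joined to `A ∪ {x, y}`. If `e(G) ≥ c n 2^(n-1)`, Cauchy–Schwarz gives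
`∑ d(C)² ≳ c² n² 2^n`, so some `A` carries `≳ c² n²` cherry pairs `(x, y)`. The
Kővári–Sós–Turán double count finds in this dense relation on `[n]` two disjoint `t`-sets `S`, `U`
all of whose cross pairs are cherries over `A`. Sending the colour classes of `H'` into `S` and
`U`, a vertex `b` to `A ∪ {b}` and an edge `bb'` to `A ∪ {b, b'}` embeds `T₁(H')` in `G`.
-/

open Finset Filter
open scoped Nat

lemma sum_le_card_filter_mul_add {ι : Type*} [Fintype ι] (f : ι → ℝ) {b K : ℝ}
    (hb : ∀ i, f i ≤ b) (hK : 0 ≤ K) :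
    ∑ i, f i ≤ #{i | K ≤ f i} * b + Fintype.card ι * K := by
  rw [← sum_filter_add_sum_filter_not univ (fun i => K ≤ f i)]
  gcongr
  · simpa using sum_le_card_nsmul _ f b fun i _ => hb i
  · calc ∑ i ∈ {i | ¬K ≤ f i}, f i ≤ #{i | ¬K ≤ f i} * K := by
          simpa using sum_le_card_nsmul _ f K fun i hi => (not_le.1 (mem_filter.1 hi).2).le
      _ ≤ Fintype.card ι * K := by gcongr; exact card_le_univ _

section Biclique

variable {α : Type*} [Fintype α] [DecidableEq α]

def rightNeighbors (E : Finset (α × α)) (x : α) : Finset α := {y | (x, y) ∈ E}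

@[simp]
lemma mem_rightNeighbors {E : Finset (α × α)} {x y : α} :
    y ∈ rightNeighbors E x ↔ (x, y) ∈ E := by
  simp [rightNeighbors]

lemma sum_card_rightNeighbors (E : Finset (α × α)) : ∑ x, #(rightNeighbors E x) = #E := by
  rw [card_eq_sum_card_fiberwise (f := Prod.fst) (t := univ) fun _ _ => mem_univ _]
  refine sum_congr rfl fun x _ => card_nbij' (x, ·) Prod.snd ?_ ?_ ?_ ?_
  all_goals intro p; aesop

lemma exists_disjoint_prod_subset_of_lt_card_mul_choose {E : Finset (α × α)} {s : Finset α}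
    {k t : ℕ} (hdeg : ∀ x ∈ s, k ≤ #(rightNeighbors E x))
    (h : 2 * t * (Fintype.card α).choose t < #s * k.choose t) :
    ∃ S U : Finset α, #S = t ∧ #U = t ∧ Disjoint S U ∧ S ×ˢ U ⊆ E := by
  set 𝒯 := (univ : Finset α).powersetCard t
  set r : α → Finset α → Prop := fun x T => T ⊆ rightNeighbors E x
  have hcount : ∑ _T ∈ 𝒯, 2 * t < ∑ T ∈ 𝒯, #(s.bipartiteBelow r T) := by
    rw [← sum_card_bipartiteAbove_eq_sum_card_bipartiteBelow, sum_const, card_powersetCard,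
      card_univ, smul_eq_mul, mul_comm]
    refine h.trans_le ?_
    rw [← smul_eq_mul, ← sum_const]
    refine sum_le_sum fun x hx => ?_
    have : 𝒯.bipartiteAbove r x = (rightNeighbors E x).powersetCard t := by
      ext T; simp [𝒯, r, mem_powersetCard, and_comm]
    rw [this, card_powersetCard]
    exact Nat.choose_le_choose t (hdeg x hx)
  -- Some `t`-set `T` lies in the neighbourhoods of over `2t` vertices, `t` of them outside `T`.
  obtain ⟨T, hT, hW⟩ := exists_lt_of_sum_lt hcount
  rw [mem_powersetCard] at hT
  obtain ⟨S, hS, hSt⟩ := exists_subset_card_eq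
    (show t ≤ #(s.bipartiteBelow r T \ T) by have := le_card_sdiff T (s.bipartiteBelow r T); omega)
  refine ⟨S, T, hSt, hT.2, disjoint_of_subset_left hS sdiff_disjoint, ?_⟩
  rintro ⟨x, y⟩ hxy
  obtain ⟨hx, hy⟩ := mem_product.1 hxy
  exact mem_rightNeighbors.1 (((mem_bipartiteBelow r).1 (mem_sdiff.1 (hS hx)).1).2 hy)

theorem exists_disjoint_prod_subset_of_dense {θ : ℝ} (hθ : 0 < θ) (t : ℕ) :
    ∃ N : ℕ, ∀ (α : Type*) [Fintype α] [DecidableEq α] (E : Finset (α × α)),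
      N ≤ Fintype.card α → θ * Fintype.card α ^ 2 ≤ #E →
      ∃ S U : Finset α, #S = t ∧ #U = t ∧ Disjoint S U ∧ S ×ˢ U ⊆ E := by
  -- The first condition gives `C(⌈θn/2⌉, t) ≥ (θn/4)ᵗ/t!`, the second makes `θn/2` vertices
  -- with that many neighbour `t`-sets outnumber `2t · C(n, t) ≤ 2t nᵗ/t!`.
  have hlin : Tendsto (fun n : ℕ => (n : ℝ)) atTop atTop := tendsto_natCast_atTop_atTop
  obtain ⟨N, hN⟩ := eventually_atTop.1 <|
    ((hlin.const_mul_atTop (by positivity : 0 < θ / 4)).eventually_ge_atTop (t : ℝ)).and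
      ((hlin.const_mul_atTop (by positivity : 0 < θ / 2 * (θ / 4) ^ t)).eventually_gt_atTop
        (2 * t : ℝ))
  refine ⟨N, fun α _ _ E hNn hE => ?_⟩
  obtain ⟨ht, hbig⟩ := hN _ hNn
  set n := Fintype.card α
  set s : Finset α := {x | θ * n / 2 ≤ (#(rightNeighbors E x) : ℝ)}
  have hn : (0 : ℝ) < n :=
    pos_of_mul_pos_right ((by positivity : (0 : ℝ) ≤ 2 * t).trans_lt hbig) (by positivity)
  have hs : θ * n / 2 ≤ #s := by
    have := sum_le_card_filter_mul_add (fun x => (#(rightNeighbors E x) : ℝ)) (b := n)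
      (K := θ * n / 2) (fun x => by exact_mod_cast card_le_univ _) (by positivity)
    rw [← Nat.cast_sum, sum_card_rightNeighbors] at this
    have : θ * n / 2 * n ≤ #s * n := by nlinarith
    exact le_of_mul_le_mul_right this hn
  set k := ⌈θ * n / 2⌉₊
  refine exists_disjoint_prod_subset_of_lt_card_mul_choose (s := s) (k := k)
    (fun x hx => Nat.ceil_le.2 (mem_filter.1 hx).2) ?_
  have hk : θ * n / 2 ≤ k := Nat.le_ceil _
  have htk : t ≤ k + 1 := by exact_mod_cast (show (t : ℝ) ≤ k + 1 by linarith)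
  have hkt : θ * n / 4 ≤ ((k + 1 - t : ℕ) : ℝ) := by push_cast [htk]; linarith
  have hfac : (0 : ℝ) < t ! := by positivity
  suffices (2 * t * n.choose t : ℝ) < #s * k.choose t by exact_mod_cast this
  calc (2 * t * n.choose t : ℝ) ≤ 2 * t * (n ^ t / t !) := by
        gcongr; exact Nat.choose_le_pow_div t n
    _ < θ * n / 2 * ((θ * n / 4) ^ t / t !) := by
        rw [← mul_div_assoc, ← mul_div_assoc]
        refine div_lt_div_of_pos_right ?_ hfac
        calc (2 * t * n ^ t : ℝ) < θ / 2 * (θ / 4) ^ t * n * n ^ t := by gcongr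
          _ = θ * n / 2 * (θ * n / 4) ^ t := by ring
    _ ≤ #s * (((k + 1 - t : ℕ) : ℝ) ^ t / t !) := by gcongr
    _ ≤ #s * k.choose t := by gcongr; exact Nat.pow_le_choose t k

section Hypercube

variable {n : ℕ} (G : SimpleGraph (Finset (Fin n)))

open Classical in
noncomputable def downNeighbors (C : Finset (Fin n)) : Finset (Fin n) :=
  {z ∈ C | G.Adj (C.erase z) C}

lemma hypercube_adj_exists_erase {X Y : Finset (Fin n)} (h : (hypercube n).Adj X Y) :
    ∃ C, ∃ z ∈ C, s(X, Y) = s(C.erase z, C) := by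
  rcases h with ⟨hXY, hcard⟩ | ⟨hYX, hcard⟩
  · obtain ⟨z, hz, rfl⟩ := exists_eq_insert_iff.2 ⟨hXY, hcard.symm⟩
    exact ⟨_, z, mem_insert_self z X, by rw [erase_insert hz]⟩
  · obtain ⟨z, hz, rfl⟩ := exists_eq_insert_iff.2 ⟨hYX, hcard.symm⟩
    exact ⟨_, z, mem_insert_self z Y, by rw [erase_insert hz, Sym2.eq_swap]⟩

lemma numEdges_le_sum_card_downNeighbors (hG : G ≤ hypercube n) :
    numEdges G ≤ ∑ C, #(downNeighbors G C) := by
  classical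
  rw [numEdges, ← coe_edgeFinset, Nat.card_coe_set_eq, Set.ncard_coe_finset,
    ← card_sigma]
  refine card_le_card_of_surjOn (fun p => s(p.1.erase p.2, p.1)) ?_
  intro e he
  induction e using Sym2.ind with
  | _ X Y =>
    have hadj : G.Adj X Y := by simpa using he
    obtain ⟨C, z, hz, hXY⟩ := hypercube_adj_exists_erase (hG hadj)
    refine ⟨⟨C, z⟩, ?_, hXY.symm⟩
    have : G.Adj (C.erase z) C := by rwa [← SimpleGraph.mem_edgeSet, ← hXY]
    simpa [downNeighbors, hz] using this

def IsCherry (A : Finset (Fin n)) (x y : Fin n) : Prop :=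
  G.Adj (insert x A) (insert x (insert y A)) ∧ G.Adj (insert y A) (insert x (insert y A))

variable {G}

lemma IsCherry.symm {A : Finset (Fin n)} {x y : Fin n} (h : IsCherry G A x y) :
    IsCherry G A y x := by
  rw [IsCherry, insert_comm y x]
  exact ⟨h.2, h.1⟩

lemma IsCherry.right_notMem {A : Finset (Fin n)} {x y : Fin n} (h : IsCherry G A x y) :
    y ∉ A := by
  intro hy
  have := h.1
  rw [insert_eq_of_mem hy] at this
  exact G.irrefl this

lemma IsCherry.left_notMem {A : Finset (Fin n)} {x y : Fin n} (h : IsCherry G A x y) :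
    x ∉ A :=
  h.symm.right_notMem

variable (G)

open Classical in
noncomputable def cherryPairs (A : Finset (Fin n)) : Finset (Fin n × Fin n) :=
  {p | IsCherry G A p.1 p.2}

variable {G}

@[simp]
lemma mem_cherryPairs {A : Finset (Fin n)} {x y : Fin n} :
    (x, y) ∈ cherryPairs G A ↔ IsCherry G A x y := by
  simp [cherryPairs]

variable (G)

lemma sum_card_offDiag_downNeighbors_le_sum_card_cherryPairs :
    ∑ C, #(downNeighbors G C).offDiag ≤ ∑ A, #(cherryPairs G A) := by
  have hC {C : Finset (Fin n)} {x y : Fin n} (hx : x ∈ C) (hy : y ∈ C) (hxy : x ≠ y) :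
      insert x (insert y ((C.erase x).erase y)) = C := by
    rw [insert_erase (mem_erase.2 ⟨hxy.symm, hy⟩), insert_erase hx]
  simp only [← card_sigma]
  refine card_le_card_of_injOn (fun p => ⟨(p.1.erase p.2.1).erase p.2.2, p.2⟩) ?_ ?_
  · rintro ⟨C, x, y⟩ h
    simp only [mem_coe, mem_sigma, mem_univ, true_and, mem_offDiag, downNeighbors,
      mem_filter] at h
    obtain ⟨⟨hxC, hx⟩, ⟨hyC, hy⟩, hxy⟩ := h
    simp only [mem_coe, mem_sigma, mem_univ, true_and, mem_cherryPairs]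
    refine ⟨?_, ?_⟩ <;> rw [hC hxC hyC hxy]
    · rwa [erase_right_comm, insert_erase (mem_erase.2 ⟨hxy, hxC⟩)]
    · rwa [insert_erase (mem_erase.2 ⟨hxy.symm, hyC⟩)]
  · rintro ⟨C, x, y⟩ h ⟨C', x', y'⟩ h' heq
    simp only [mem_coe, mem_sigma, mem_univ, true_and, mem_offDiag, downNeighbors,
      mem_filter] at h h'
    obtain ⟨hA, hxy⟩ := Sigma.mk.inj_iff.1 heq
    obtain ⟨rfl, rfl⟩ := Prod.ext_iff.1 (eq_of_heq hxy)
    rw [← hC h.1.1 h.2.1.1 h.2.2, ← hC h'.1.1 h'.2.1.1 h'.2.2, hA]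

lemma exists_le_card_cherryPairs (hG : G ≤ hypercube n) {c : ℝ} (hc : 0 ≤ c)
    (hcn : 8 ≤ c ^ 2 * n) (hE : c * n * 2 ^ (n - 1) ≤ numEdges G) :
    ∃ A, c ^ 2 / 8 * n ^ 2 ≤ #(cherryPairs G A) := by
  set d : Finset (Fin n) → ℝ := fun C => #(downNeighbors G C)
  set T : ℝ := 2 ^ (n - 1)
  have hn : 1 ≤ n := by
    by_contra! h
    simp [Nat.lt_one_iff.1 h] at hcn
    linarith
  have hT : (2 : ℝ) ^ n = 2 * T := by rw [← pow_succ', Nat.sub_add_cancel hn]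
  have hsum : c * n * T ≤ ∑ C, d C :=
    hE.trans (by simp only [d]; exact_mod_cast numEdges_le_sum_card_downNeighbors G hG)
  have hle : ∑ C, d C ≤ n * (2 * T) := by
    calc ∑ C, d C ≤ ∑ _C : Finset (Fin n), (n : ℝ) := by
          gcongr with C
          simp only [d]
          exact_mod_cast (card_le_univ _).trans_eq (Fintype.card_fin n)
      _ = n * (2 * T) := by simp [hT, mul_comm]
  have hCS : (∑ C, d C) ^ 2 ≤ 2 * T * ∑ C, d C ^ 2 := by
    simpa [hT] using sq_sum_le_card_mul_sum_sq (s := univ) (f := d)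
  have hpairs : ∑ C, d C ^ 2 - ∑ C, d C ≤ ∑ A, (#(cherryPairs G A) : ℝ) := by
    have h : (∑ C, #(downNeighbors G C).offDiag : ℝ) ≤ ∑ A, (#(cherryPairs G A) : ℝ) := by
      exact_mod_cast sum_card_offDiag_downNeighbors_le_sum_card_cherryPairs G
    refine le_of_eq_of_le ?_ h
    rw [← sum_sub_distrib]
    refine sum_congr rfl fun C _ => ?_
    rw [offDiag_card, Nat.cast_sub (Nat.le_mul_self _)]
    push_cast; ring
  have hTpos : 0 < T := by positivity
  have hsq : c ^ 2 * n ^ 2 * T ≤ 2 * ∑ C, d C ^ 2 := by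
    have h1 : (c * n * T) ^ 2 ≤ 2 * T * ∑ C, d C ^ 2 :=
      (pow_le_pow_left₀ (by positivity) hsum 2).trans hCS
    nlinarith
  have htotal : ∑ _A : Finset (Fin n), c ^ 2 / 8 * n ^ 2 ≤ ∑ A, (#(cherryPairs G A) : ℝ) := by
    rw [sum_const, card_univ, Fintype.card_finset, Fintype.card_fin, nsmul_eq_mul]
    push_cast
    rw [hT]
    nlinarith [mul_nonneg (mul_nonneg (Nat.cast_nonneg n) hTpos.le) (sub_nonneg.2 hcn)]
  obtain ⟨A, -, hA⟩ := exists_le_of_sum_le univ_nonempty htotal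
  exact ⟨A, hA⟩

end Hypercube

lemma SimpleGraph.Colorable.exists_injective_of_biclique {α β : Type*} [DecidableEq α]
    [Fintype β] {H : SimpleGraph β} (hH : H.Colorable 2) {R : α → α → Prop}
    (hR : ∀ x y, R x y → R y x)
    {S U : Finset α} (hS : Fintype.card β ≤ #S) (hU : Fintype.card β ≤ #U) (hSU : Disjoint S U)
    (hcross : ∀ x ∈ S, ∀ y ∈ U, R x y) :
    ∃ m : β → α, Function.Injective m ∧ (∀ b, m b ∈ S ∪ U) ∧
      ∀ b b', H.Adj b b' → R (m b) (m b') := by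
  classical
  obtain ⟨col⟩ := hH
  obtain ⟨e₀⟩ := Function.Embedding.nonempty_of_card_le (β := S) (by simpa using hS)
  obtain ⟨e₁⟩ := Function.Embedding.nonempty_of_card_le (β := U) (by simpa using hU)
  set m : β → α := fun b => if col b = 0 then e₀ b else e₁ b
  have hm₀ {b} (h : col b = 0) : m b ∈ S := by simp [m, h]
  have hm₁ {b} (h : col b ≠ 0) : m b ∈ U := by simp [m, h]
  refine ⟨m, fun b b' hbb' => ?_, fun b => ?_, fun b b' hbb' => ?_⟩
  · by_cases h : col b = 0 <;> by_cases h' : col b' = 0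
    · simpa [m, h, h', Subtype.val_inj] using hbb'
    · exact absurd (hbb' ▸ hm₀ h) (Finset.disjoint_left.1 hSU · (hm₁ h'))
    · exact absurd (hbb' ▸ hm₁ h) (Finset.disjoint_right.1 hSU · (hm₀ h'))
    · simpa [m, h, h', Subtype.val_inj] using hbb'
  · by_cases h : col b = 0
    exacts [mem_union_left _ (hm₀ h), mem_union_right _ (hm₁ h)]
  · have hne := col.valid hbb'
    by_cases h : col b = 0
    · exact hcross _ (hm₀ h) _ (hm₁ (h ▸ hne.symm))
    · exact hR _ _ (hcross _ (hm₀ (by omega)) _ (hm₁ h))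

lemma injective_image_union {α β : Type*} [DecidableEq α] {m : β → α} (hm : Function.Injective m)
    {A : Finset α} (hA : ∀ b, m b ∉ A) : Function.Injective fun X : Finset β => X.image m ∪ A := by
  intro X Y hXY
  ext b
  have := congrArg (m b ∈ ·) hXY
  simpa [hA, hm.eq_iff] using this

lemma injective_sumElim_singleton_toFinset {β : Type*} [DecidableEq β] (H : SimpleGraph β) :
    Function.Injective (Sum.elim (fun b => {b}) fun e : H.edgeSet => (e : Sym2 β).toFinset) := by
  have hcard (e : H.edgeSet) : #(e : Sym2 β).toFinset = 2 :=
    Sym2.card_toFinset_of_not_isDiag _ (H.not_isDiag_of_mem_edgeSet e.2)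
  rintro (b | e) (b' | e') h <;> simp only [Sum.elim_inl, Sum.elim_inr] at h
  · rw [singleton_inj.1 h]
  · simpa [hcard] using congrArg card h
  · simpa [hcard] using congrArg card h
  · refine congrArg _ (Subtype.ext (Sym2.ext fun b => ?_))
    rw [← Sym2.mem_toFinset, h, Sym2.mem_toFinset]

lemma containsCopy_oneSubdivision_of_isCherry {n : ℕ} {G : SimpleGraph (Finset (Fin n))}
    {β : Type*} {H : SimpleGraph β} {A : Finset (Fin n)} {m : β → Fin n}
    (hm : Function.Injective m) (hA : ∀ b, m b ∉ A)
    (hadj : ∀ b b', H.Adj b b' → IsCherry G A (m b) (m b')) :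
    ContainsCopy G (oneSubdivision H) := by
  classical
  set f := fun v =>
    (Sum.elim (fun b => {b}) (fun e : H.edgeSet => (e : Sym2 β).toFinset) v).image m ∪ A
  have hf : ∀ b (e : H.edgeSet), b ∈ (e : Sym2 β) → G.Adj (f (.inl b)) (f (.inr e)) := by
    rintro b ⟨e, he⟩ hb
    obtain ⟨w, rfl⟩ := Sym2.mem_iff_exists.1 hb
    simpa only [f, Sum.elim_inl, Sum.elim_inr, Sym2.toFinset_mk_eq, image_insert, image_singleton,
      insert_union, ← insert_eq] using (hadj b w he).1
  refine ⟨f, (injective_image_union hm hA).comp (injective_sumElim_singleton_toFinset H), ?_⟩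
  rintro (b | e) (b' | e') h
  all_goals simp only [oneSubdivision, fromRel_adj, or_false, false_or, and_false] at h
  · exact hf b e' h.2
  · exact (hf b' e h.2).symm

theorem ex_one_subdivision_general {β : Type} [Fintype β] (H' : SimpleGraph β)
    (hbip : H'.Colorable 2) :
    ∀ c : ℝ, 0 < c → ∃ N : ℕ, ∀ n : ℕ, N ≤ n →
      ∀ G : SimpleGraph (Finset (Fin n)), G ≤ hypercube n →
        c * n * 2 ^ (n - 1) ≤ (numEdges G : ℝ) →
        ContainsCopy G (oneSubdivision H') := by
  intro c hc
  obtain ⟨N, hN⟩ := exists_disjoint_prod_subset_of_dense (θ := c ^ 2 / 8) (by positivity)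
    (Fintype.card β + 1)
  refine ⟨max N ⌈8 / c ^ 2⌉₊, fun n hn G hG hE => ?_⟩
  have hcn : 8 ≤ c ^ 2 * n := by
    rw [← div_le_iff₀' (by positivity)]
    exact Nat.ceil_le.1 (le_of_max_le_right hn)
  obtain ⟨A, hA⟩ := exists_le_card_cherryPairs G hG hc.le hcn hE
  obtain ⟨S, U, hS, hU, hSU, hSUA⟩ :=
    hN (Fin n) (cherryPairs G A) (by simpa using le_of_max_le_left hn) (by simpa using hA)
  have hcherry : ∀ x ∈ S, ∀ y ∈ U, IsCherry G A x y := fun x hx y hy =>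
    mem_cherryPairs.1 (hSUA (mk_mem_product hx hy))
  obtain ⟨m, hm, hmSU, hmadj⟩ := hbip.exists_injective_of_biclique (fun _ _ => IsCherry.symm)
    (by omega) (by omega) hSU hcherry
  obtain ⟨x₀, hx₀⟩ := card_pos.1 (by omega : 0 < #S)
  obtain ⟨y₀, hy₀⟩ := card_pos.1 (by omega : 0 < #U)
  refine containsCopy_oneSubdivision_of_isCherry hm (fun b => ?_) hmadj
  rcases mem_union.1 (hmSU b) with hb | hb
  exacts [(hcherry _ hb _ hy₀).left_notMem, (hcherry _ hx₀ _ hb).right_notMem]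

/-- If `H'` is a bipartite graph whose 1-subdivision `H = T₁(H')` is cubical, then
`ex(Q_n, H) = o(n·2^{n-1})`: for every `c > 0` and all sufficiently large `n`, every
subgraph of `Q_n` with at least `c·n·2^{n-1}` edges contains a copy of `T₁(H')`. -/
theorem ex_one_subdivision {β : Type} [Fintype β] (H' : SimpleGraph β)
    (hbip : H'.Colorable 2) (hcub : IsCubical (oneSubdivision H')) :
    ∀ c : ℝ, 0 < c → ∃ N : ℕ, ∀ n : ℕ, N ≤ n →
      ∀ G : SimpleGraph (Finset (Fin n)), G ≤ hypercube n →
        c * n * 2 ^ (n - 1) ≤ (numEdges G : ℝ) →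
        ContainsCopy G (oneSubdivision H') :=
  ex_one_subdivision_general H' hbip
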